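/- arXiv:2307.01280 — 6 statements merged into one kernel-verified Lean document; each statement's English description precedes it below -/
import Mathlib

section
/- Let ⊕ be a sum of open sets in ℝ^d satisfying the six requirements (monotonicity, commutativity, associativity when bounded, translation invariance, cubic rotation invariance, and conservation of measure). Let N = 2/((9/8)^{1/d} − 1). Then for every r > 0, B_r ⊕ B_r ⊆ B_{Nr}, where B_r is the open ball of radius r centered at the origin. -/
open MeasureTheory Metric Bornology

/-- Points of `ℝ^d`. -/
abbrev Pt (d : ℕ) := EuclideanSpace ℝ (Fin d)

/-- A cubic isometry: a linear isometry of ℝ^d mapping the cube [−1,1]^d to itself. -/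
def CubicIsometry {d : ℕ} (U : Pt d ≃ₗᵢ[ℝ] Pt d) : Prop :=
  ⇑U '' {y : Pt d | ∀ i, |y i| ≤ 1} = {y : Pt d | ∀ i, |y i| ≤ 1}

/-- A bounded open set. -/
def GoodSet {d : ℕ} (A : Set (Pt d)) : Prop := IsOpen A ∧ Bornology.IsBounded A

/-- A sum of open sets satisfying the six requirements exactly: it sends bounded open
sets to open sets and is monotone, commutative, associative (when the intermediate sums
are bounded), translation invariant, invariant under cubic isometries, and conserves
Lebesgue measure. -/
structure SumAxioms (d : ℕ) (Φ : Set (Pt d) → Set (Pt d) → Set (Pt d)) : Prop where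
  isOpen : ∀ A B, GoodSet A → GoodSet B → IsOpen (Φ A B)
  subset_sum : ∀ A B, GoodSet A → GoodSet B → A ⊆ Φ A B
  mono : ∀ A B C, GoodSet A → GoodSet B → GoodSet C → A ⊆ B → Φ A C ⊆ Φ B C
  comm : ∀ A B, GoodSet A → GoodSet B → Φ A B = Φ B A
  assoc : ∀ A B C, GoodSet A → GoodSet B → GoodSet C →
      Bornology.IsBounded (Φ A B) → Bornology.IsBounded (Φ B C) →
      Φ (Φ A B) C = Φ A (Φ B C)
  translate : ∀ (A B : Set (Pt d)) (x : Pt d), GoodSet A → GoodSet B →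
      Φ ((· + x) '' A) ((· + x) '' B) = (· + x) '' (Φ A B)
  rotate : ∀ (A B : Set (Pt d)) (U : Pt d ≃ₗᵢ[ℝ] Pt d), CubicIsometry U →
      GoodSet A → GoodSet B → Φ (⇑U '' A) (⇑U '' B) = ⇑U '' (Φ A B)
  conserve : ∀ A B, GoodSet A → GoodSet B → volume (Φ A B) = volume A + volume B

lemma goodSet_ball {d : ℕ} (c : Pt d) (s : ℝ) : GoodSet (ball c s) :=
  ⟨isOpen_ball, isBounded_ball⟩

lemma image_add_ball {d : ℕ} (z : Pt d) (s : ℝ) :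
    (· + z) '' ball (0 : Pt d) s = ball z s := by
  ext y
  constructor
  · rintro ⟨w, hw, rfl⟩
    rw [mem_ball, dist_eq_norm, add_sub_cancel_right]
    simpa [dist_eq_norm] using hw
  · intro hy
    refine ⟨y - z, by simpa [dist_eq_norm] using hy, ?_⟩
    simp

/-- The negation map is a cubic isometry. -/
lemma cubic_neg (d : ℕ) : CubicIsometry (LinearIsometryEquiv.neg ℝ (E := Pt d)) := by
  unfold CubicIsometry
  have hc : ⇑(LinearIsometryEquiv.neg ℝ (E := Pt d)) = Neg.neg := rfl
  rw [hc]
  ext y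
  constructor
  · rintro ⟨w, hw, rfl⟩ i
    simpa using hw i
  · intro hy
    exact ⟨-y, fun i => by simpa using hy i, by simp⟩

/-- The sum of two balls centered at the origin is symmetric under negation. -/
lemma neg_mem_sum {d : ℕ} {Φ : Set (Pt d) → Set (Pt d) → Set (Pt d)}
    (hax : SumAxioms d Φ) (s : ℝ) {y : Pt d}
    (hy : y ∈ Φ (ball (0 : Pt d) s) (ball (0 : Pt d) s)) :
    -y ∈ Φ (ball (0 : Pt d) s) (ball (0 : Pt d) s) := by
  have hU := hax.rotate (ball 0 s) (ball 0 s) _ (cubic_neg d)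
      (goodSet_ball _ _) (goodSet_ball _ _)
  have hc : ⇑(LinearIsometryEquiv.neg ℝ (E := Pt d)) = Neg.neg := rfl
  rw [hc] at hU
  have hball : Neg.neg '' ball (0 : Pt d) s = ball (0 : Pt d) s := by
    ext w
    constructor
    · rintro ⟨v, hv, rfl⟩
      simpa using hv
    · intro hw
      exact ⟨-w, by simpa using hw, by simp⟩
  rw [hball] at hU
  rw [hU]
  exact ⟨y, hy, rfl⟩

/-- Key inclusion: if `x ∈ Φ (ball 0 r) (ball 0 r)` then
`ball x t ⊆ Φ (ball 0 (r+t)) (ball 0 (r+t))`. -/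
lemma ball_subset_sum {d : ℕ} {Φ : Set (Pt d) → Set (Pt d) → Set (Pt d)}
    (hax : SumAxioms d Φ) {r t : ℝ} {x : Pt d}
    (hx : x ∈ Φ (ball (0 : Pt d) r) (ball (0 : Pt d) r)) :
    ball x t ⊆ Φ (ball (0 : Pt d) (r + t)) (ball (0 : Pt d) (r + t)) := by
  intro y hy
  set z : Pt d := y - x with hz
  have hzy : y = x + z := by rw [hz]; abel
  have hznorm : ‖z‖ < t := by
    rw [hz]
    simpa [dist_eq_norm] using hy
  have htr := hax.translate (ball 0 r) (ball 0 r) z (goodSet_ball _ _) (goodSet_ball _ _)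
  rw [image_add_ball] at htr
  have h1 : y ∈ Φ (ball z r) (ball z r) := by
    rw [htr, hzy]
    exact ⟨x, hx, rfl⟩
  have hsub : ball z r ⊆ ball (0 : Pt d) (r + t) := by
    intro w hw
    have hwz : dist w z < r := mem_ball.mp hw
    have : dist w 0 < r + t := by
      calc dist w 0 ≤ dist w z + dist z 0 := dist_triangle _ _ _
        _ < r + t := by
            rw [dist_zero_right]
            linarith
    exact mem_ball.mpr this
  have h2 : Φ (ball z r) (ball z r) ⊆ Φ (ball (0 : Pt d) (r + t)) (ball z r) :=
    hax.mono _ _ _ (goodSet_ball _ _) (goodSet_ball _ _) (goodSet_ball _ _) hsub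
  have h3 : Φ (ball (0 : Pt d) (r + t)) (ball z r)
      ⊆ Φ (ball (0 : Pt d) (r + t)) (ball (0 : Pt d) (r + t)) := by
    rw [hax.comm _ _ (goodSet_ball _ _) (goodSet_ball _ _)]
    exact hax.mono (ball z r) (ball (0 : Pt d) (r + t)) (ball (0 : Pt d) (r + t))
      (goodSet_ball _ _) (goodSet_ball _ _) (goodSet_ball _ _) hsub
  exact h3 (h2 h1)

/-- Volume comparison: three disjoint balls inside a set of volume `2·vol(ball u)`. -/
lemma vol_compare (d : ℕ) (hd : 0 < d) (t u : ℝ) (ht : 0 < t) (hu : 0 < u)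
    (x : Pt d) (hxu : t + u ≤ dist x (0:Pt d)) (hxx : t + t ≤ dist x (-x))
    (F : Set (Pt d)) (hF : volume F = 2 * volume (ball (0:Pt d) u))
    (h1 : ball x t ⊆ F) (h2 : ball (-x) t ⊆ F) (h3 : ball (0:Pt d) u ⊆ F) :
    2 * t ^ d ≤ u ^ d := by
  have hrank : Module.finrank ℝ (Pt d) = d := finrank_euclideanSpace_fin
  haveI : Nontrivial (Pt d) :=
    Module.nontrivial_of_finrank_pos (R := ℝ) (by omega : 0 < Module.finrank ℝ (Pt d))
  have hd12 : Disjoint (ball x t) (ball (-x) t) := ball_disjoint_ball hxx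
  have hd13 : Disjoint (ball x t) (ball (0:Pt d) u) := ball_disjoint_ball hxu
  have hd23 : Disjoint (ball (-x) t) (ball (0:Pt d) u) := by
    apply ball_disjoint_ball
    rwa [dist_zero_right, norm_neg, ← dist_zero_right]
  have hdU : Disjoint (ball x t ∪ ball (-x) t) (ball (0:Pt d) u) :=
    Disjoint.union_left hd13 hd23
  have hunion : volume (ball x t ∪ ball (-x) t ∪ ball (0:Pt d) u)
      = volume (ball x t) + volume (ball (-x) t) + volume (ball (0:Pt d) u) := by
    rw [measure_union hdU measurableSet_ball, measure_union hd12 measurableSet_ball]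
  have hle : volume (ball x t) + volume (ball (-x) t) + volume (ball (0:Pt d) u)
      ≤ volume F := by
    rw [← hunion]
    refine measure_mono ?_
    intro w hw
    rcases hw with (hw | hw) | hw
    · exact h1 hw
    · exact h2 hw
    · exact h3 hw
  rw [hF] at hle
  rw [Measure.addHaar_ball volume x ht.le, Measure.addHaar_ball volume (-x) ht.le,
      Measure.addHaar_ball volume (0:Pt d) hu.le, hrank] at hle
  set c := volume (ball (0:Pt d) 1) with hc
  have hc0 : c ≠ 0 := (measure_ball_pos volume _ one_pos).ne'
  have hctop : c ≠ ⊤ := measure_ball_lt_top.ne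
  have htd : (0:ℝ) ≤ t ^ d := by positivity
  have hud : (0:ℝ) ≤ u ^ d := by positivity
  have hle2 : ENNReal.ofReal (2 * t ^ d + u ^ d) ≤ ENNReal.ofReal (2 * u ^ d) := by
    have hL : ENNReal.ofReal (t ^ d) * c + ENNReal.ofReal (t ^ d) * c
        + ENNReal.ofReal (u ^ d) * c
        = ENNReal.ofReal (2 * t ^ d + u ^ d) * c := by
      rw [ENNReal.ofReal_add (by positivity) hud, two_mul,
        ENNReal.ofReal_add htd htd, add_mul, add_mul]
    have hR : (2 : ENNReal) * (ENNReal.ofReal (u ^ d) * c)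
        = ENNReal.ofReal (2 * u ^ d) * c := by
      rw [show (2:ℝ) * u ^ d = u ^ d + u ^ d by ring, ENNReal.ofReal_add hud hud,
        add_mul, two_mul]
    rw [hL, hR] at hle
    exact (ENNReal.mul_le_mul_iff_left hc0 hctop).mp hle
  have := (ENNReal.ofReal_le_ofReal_iff (by positivity)).mp hle2
  linarith

lemma num1 (d : ℕ) (hd : 0 < d) :
    (9/8 : ℝ) ^ ((d : ℝ)⁻¹) ≤ 1 + 1/(8*(d:ℝ)) := by
  have hD0 : (0:ℝ) < d := by exact_mod_cast hd
  have hs0 : (0:ℝ) ≤ 1 + 1/(8*(d:ℝ)) := by positivity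
  have base : (9/8 : ℝ) ≤ (1 + 1/(8*(d:ℝ))) ^ d := by
    have hnn : (0:ℝ) ≤ 1/(8*(d:ℝ)) := by positivity
    have h := one_add_mul_le_pow (a := 1/(8*(d:ℝ))) (by linarith) d
    have heq : 1 + (d:ℝ) * (1/(8*(d:ℝ))) = 9/8 := by field_simp; ring
    linarith
  have step := Real.rpow_le_rpow (by norm_num : (0:ℝ) ≤ 9/8) base (by positivity : (0:ℝ) ≤ (d:ℝ)⁻¹)
  calc (9/8 : ℝ) ^ ((d : ℝ)⁻¹) ≤ ((1 + 1/(8*(d:ℝ))) ^ d) ^ ((d : ℝ)⁻¹) := step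
    _ = 1 + 1/(8*(d:ℝ)) := by
        rw [← Real.rpow_natCast (1 + 1/(8*(d:ℝ))) d, ← Real.rpow_mul hs0,
          mul_inv_cancel₀ hD0.ne', Real.rpow_one]

lemma num2 (d : ℕ) (hd : 0 < d) : 1 + 1/(2*(d:ℝ)) < (2:ℝ) ^ ((d : ℝ)⁻¹) := by
  have hD0 : (0:ℝ) < d := by exact_mod_cast hd
  have hpow : (1 + 1/(2*(d:ℝ))) ^ d < 2 := by
    have e1 : (1 + 1/(2*(d:ℝ))) ≤ Real.exp (1/(2*(d:ℝ))) := by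
      have := Real.add_one_le_exp (1/(2*(d:ℝ))); linarith
    have e2 : (1 + 1/(2*(d:ℝ))) ^ d ≤ Real.exp (1/(2*(d:ℝ))) ^ d :=
      pow_le_pow_left₀ (by positivity) e1 d
    have e3 : Real.exp (1/(2*(d:ℝ))) ^ d = Real.exp (1/2) := by
      rw [← Real.exp_nat_mul]
      congr 1
      field_simp
    have e4 : Real.exp (1/2) < 2 := by
      have esq : Real.exp (1/2) ^ (2:ℕ) = Real.exp 1 := by
        rw [← Real.exp_nat_mul]; norm_num
      nlinarith [Real.exp_one_lt_d9, Real.exp_pos (1/2)]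
    calc (1 + 1/(2*(d:ℝ))) ^ d ≤ Real.exp (1/(2*(d:ℝ))) ^ d := e2
      _ = Real.exp (1/2) := e3
      _ < 2 := e4
  have hb : ((2:ℝ) ^ ((d : ℝ)⁻¹)) ^ d = 2 := by
    rw [← Real.rpow_natCast ((2:ℝ) ^ ((d : ℝ)⁻¹)) d, ← Real.rpow_mul (by norm_num : (0:ℝ) ≤ 2),
      inv_mul_cancel₀ hD0.ne', Real.rpow_one]
  refine (pow_lt_pow_iff_left₀ (by positivity) (by positivity) hd.ne').mp ?_
  rw [hb]
  exact hpow

lemma root_step (d : ℕ) (hd : 0 < d) {t u : ℝ} (ht : 0 ≤ t) (hu : 0 ≤ u)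
    (h : 2 * t ^ d ≤ u ^ d) : (2:ℝ) ^ ((d : ℝ)⁻¹) * t ≤ u := by
  have hD0 : (0:ℝ) < d := by exact_mod_cast hd
  have hb : ((2:ℝ) ^ ((d : ℝ)⁻¹)) ^ d = 2 := by
    rw [← Real.rpow_natCast ((2:ℝ) ^ ((d : ℝ)⁻¹)) d, ← Real.rpow_mul (by norm_num : (0:ℝ) ≤ 2),
      inv_mul_cancel₀ hD0.ne', Real.rpow_one]
  have key : ((2:ℝ) ^ ((d : ℝ)⁻¹) * t) ^ d ≤ u ^ d := by
    rw [mul_pow, hb]; exact h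
  exact (pow_le_pow_iff_left₀ (by positivity) hu hd.ne').mp key

/-- Let ⊕ be a sum of open sets in ℝ^d satisfying the six requirements, and
let N = 2/((9/8)^{1/d} − 1). Then for every r > 0, B_r ⊕ B_r ⊆ B_{Nr}. -/
theorem sum_of_balls_subset_ball (d : ℕ) (hd : 0 < d)
    (Φ : Set (Pt d) → Set (Pt d) → Set (Pt d)) (hax : SumAxioms d Φ)
    (r : ℝ) (hr : 0 < r) :
    Φ (Metric.ball (0 : Pt d) r) (Metric.ball (0 : Pt d) r) ⊆
      Metric.ball (0 : Pt d) ((2 / ((9 / 8 : ℝ) ^ ((d : ℝ)⁻¹) - 1)) * r) := by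
  intro x hx
  have hD0 : (0:ℝ) < d := by exact_mod_cast hd
  have hD1 : (1:ℝ) ≤ d := by exact_mod_cast hd
  set ρ : ℝ := (9/8 : ℝ) ^ ((d : ℝ)⁻¹) with hρ
  have hρ1 : 1 < ρ := by
    rw [hρ]
    apply Real.one_lt_rpow_iff_of_pos (by norm_num) |>.mpr
    left
    constructor
    · norm_num
    · positivity
  have hρu : ρ ≤ 1 + 1/(8*(d:ℝ)) := num1 d hd
  rw [mem_ball_zero_iff]
  by_contra hcon
  push_neg at hcon
  -- hcon : 2/(ρ-1) * r ≤ ‖x‖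
  set R : ℝ := ‖x‖ with hRdef
  have hC : 16*(d:ℝ) ≤ 2/(ρ-1) := by
    rw [le_div_iff₀ (by linarith : (0:ℝ) < ρ - 1)]
    have hkey : 8*(d:ℝ)*(1/(8*(d:ℝ))) = 1 := by field_simp
    nlinarith [mul_le_mul_of_nonneg_left (show ρ - 1 ≤ 1/(8*(d:ℝ)) by linarith)
      (show (0:ℝ) ≤ 8*(d:ℝ) by positivity), hkey]
  have hCR : 16*(d:ℝ)*r ≤ R := by
    calc 16*(d:ℝ)*r ≤ (2/(ρ-1)) * r := by
          apply mul_le_mul_of_nonneg_right hC hr.le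
      _ ≤ R := hcon
  have hrR : r < R := by nlinarith
  set t : ℝ := (R - r)/2 with htdef
  have ht : 0 < t := by rw [htdef]; linarith
  have hrt : 0 < r + t := by linarith
  -- the enlarged sum
  set F := Φ (ball (0 : Pt d) (r + t)) (ball (0 : Pt d) (r + t)) with hFdef
  have h1 : ball x t ⊆ F := ball_subset_sum hax hx
  have h2 : ball (-x) t ⊆ F := ball_subset_sum hax (neg_mem_sum hax r hx)
  have h3 : ball (0 : Pt d) (r + t) ⊆ F :=
    hax.subset_sum _ _ (goodSet_ball _ _) (goodSet_ball _ _)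
  have hF : volume F = 2 * volume (ball (0:Pt d) (r + t)) := by
    rw [hFdef, hax.conserve _ _ (goodSet_ball _ _) (goodSet_ball _ _), two_mul]
  have hxu : t + (r + t) ≤ dist x (0 : Pt d) := by
    rw [dist_zero_right, ← hRdef, htdef]
    linarith
  have hxx : t + t ≤ dist x (-x) := by
    have : dist x (-x) = 2 * ‖x‖ := by
      rw [dist_eq_norm, sub_neg_eq_add, ← two_smul ℝ x, norm_smul]
      simp
    rw [this, ← hRdef]
    linarith
  have hvol : 2 * t ^ d ≤ (r + t) ^ d :=
    vol_compare d hd t (r + t) ht hrt x hxu hxx F hF h1 h2 h3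
  have hroot : (2:ℝ) ^ ((d : ℝ)⁻¹) * t ≤ r + t := root_step d hd ht.le hrt.le hvol
  have hb := num2 d hd
  -- (b - 1) * t ≤ r  and  b - 1 > 1/(2d)  give t < 2 d r
  have h5 : t * (1/(2*(d:ℝ))) < r := by nlinarith [mul_lt_mul_of_pos_right hb ht]
  have h6 : t < 2*(d:ℝ)*r := by
    have : t = (t * (1/(2*(d:ℝ)))) * (2*(d:ℝ)) := by field_simp
    rw [this]
    calc (t * (1/(2*(d:ℝ)))) * (2*(d:ℝ)) < r * (2*(d:ℝ)) := by
          apply mul_lt_mul_of_pos_right h5; linarith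
      _ = 2*(d:ℝ)*r := by ring
  have htlow : (16*(d:ℝ)*r - r)/2 ≤ t := by
    rw [htdef]
    linarith
  have hdr : r ≤ (d:ℝ)*r := le_mul_of_one_le_left hr.le hD1
  linarith
end

section
/- Let ⊕ be a sum of open sets in ℝ^d satisfying the six requirements (monotonicity, commutativity, associativity when bounded, translation invariance, cubic rotation invariance, and conservation of measure). Then for all bounded open sets A, B ⊆ ℝ^d, the set A ⊕ B is bounded. -/
open MeasureTheory Metric Bornology

open Pointwise

namespace SumBoundedAux

variable {d : ℕ}

/-- The open cube of "radius" `a` centered at the origin. -/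
def cube (d : ℕ) (a : ℝ) : Set (Pt d) := {y | ∀ i, |y i| < a}

lemma abs_coord_le_norm (a : Pt d) (i : Fin d) : |a i| ≤ ‖a‖ := by
  rw [EuclideanSpace.norm_eq]
  have h1 : |a i| ^ 2 ≤ ∑ j, ‖a j‖ ^ 2 := by
    have := Finset.single_le_sum (f := fun j => ‖a j‖ ^ 2)
      (fun j _ => sq_nonneg _) (Finset.mem_univ i)
    simpa [Real.norm_eq_abs] using this
  calc |a i| = Real.sqrt (|a i| ^ 2) := by rw [Real.sqrt_sq (abs_nonneg _)]
    _ ≤ _ := Real.sqrt_le_sqrt h1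

lemma isOpen_cube (a : ℝ) : IsOpen (cube d a) := by
  have : cube d a = ⋂ i, (fun y : Pt d => y i) ⁻¹' {t : ℝ | |t| < a} := by
    ext y; simp [cube]
  rw [this]
  exact isOpen_iInter_of_finite fun i =>
    (isOpen_lt continuous_abs continuous_const).preimage (by fun_prop)

lemma isBounded_cube (a : ℝ) : IsBounded (cube d a) := by
  rw [isBounded_iff_forall_norm_le]
  refine ⟨Real.sqrt ((d : ℝ) * (max a 0) ^ 2), fun y hy => ?_⟩
  rw [EuclideanSpace.norm_eq]
  apply Real.sqrt_le_sqrt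
  calc ∑ j, ‖y j‖ ^ 2 ≤ ∑ _j : Fin d, (max a 0) ^ 2 := by
        apply Finset.sum_le_sum
        intro j _
        have h1 : |y j| ≤ max a 0 := le_max_of_le_left (hy j).le
        have := pow_le_pow_left₀ (abs_nonneg (y j)) h1 2
        simpa [Real.norm_eq_abs] using this
    _ = (d : ℝ) * (max a 0) ^ 2 := by simp [Finset.sum_const, nsmul_eq_mul]

lemma goodSet_cube (a : ℝ) : GoodSet (cube d a) := ⟨isOpen_cube a, isBounded_cube a⟩

lemma goodSet_translate {A : Set (Pt d)} (hA : GoodSet A) (x : Pt d) :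
    GoodSet ((· + x) '' A) := by
  constructor
  · exact (Homeomorph.addRight x).isOpenMap _ hA.1
  · obtain ⟨C, hC⟩ := isBounded_iff_forall_norm_le.mp hA.2
    rw [isBounded_iff_forall_norm_le]
    refine ⟨C + ‖x‖, ?_⟩
    rintro y ⟨z, hz, rfl⟩
    calc ‖z + x‖ ≤ ‖z‖ + ‖x‖ := norm_add_le _ _
      _ ≤ C + ‖x‖ := by have := hC z hz; linarith

lemma neg_image_cube (a : ℝ) :
    (⇑(LinearIsometryEquiv.neg ℝ (E := Pt d))) '' cube d a = cube d a := by
  ext y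
  constructor
  · rintro ⟨z, hz, rfl⟩
    intro i
    simpa using hz i
  · intro hy
    refine ⟨-y, fun i => ?_, by simp⟩
    simpa using hy i

lemma cubicIsometry_neg : CubicIsometry (LinearIsometryEquiv.neg ℝ (E := Pt d)) := by
  unfold CubicIsometry
  ext y
  constructor
  · rintro ⟨z, hz, rfl⟩
    intro i
    simpa using hz i
  · intro hy
    refine ⟨-y, fun i => ?_, by simp⟩
    simpa using hy i

end SumBoundedAux

open SumBoundedAux


/-- Let ⊕ be a sum of open sets in ℝ^d satisfying the six requirements. Then
for all bounded open sets A, B, the set A ⊕ B is bounded. -/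
theorem sum_isBounded (d : ℕ)
    (Φ : Set (Pt d) → Set (Pt d) → Set (Pt d)) (hax : SumAxioms d Φ)
    (A B : Set (Pt d)) (hA : GoodSet A) (hB : GoodSet B) :
    Bornology.IsBounded (Φ A B) := by
  rcases Nat.eq_zero_or_pos d with hd0 | hd0
  · subst hd0
    haveI : Subsingleton (Pt 0) := inferInstance
    exact (Set.toFinite _).isBounded
  by_contra hub
  -- choose a cube containing A and B
  obtain ⟨CA, hCA⟩ := isBounded_iff_forall_norm_le.mp hA.2
  obtain ⟨CB, hCB⟩ := isBounded_iff_forall_norm_le.mp hB.2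
  set r : ℝ := |CA| + |CB| + 1 with hr_def
  have hr : 0 < r := by positivity
  have hAsub : A ⊆ cube d r := by
    intro a ha i
    have h1 := abs_coord_le_norm a i
    have h2 := hCA a ha
    have : CA ≤ |CA| := le_abs_self _
    simp only [hr_def]
    linarith [abs_nonneg CB]
  have hBsub : B ⊆ cube d r := by
    intro a ha i
    have h1 := abs_coord_le_norm a i
    have h2 := hCB a ha
    have : CB ≤ |CB| := le_abs_self _
    simp only [hr_def]
    linarith [abs_nonneg CA]
  set R : ℝ := (2 * (d : ℝ) + 2) * r with hR_def
  have hRr : R - r = (2 * (d : ℝ) + 1) * r := by ring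
  have hrR : r < R := by
    have h1 : (1 : ℝ) ≤ 2 * (d : ℝ) + 1 := by
      have : (0:ℝ) ≤ (d:ℝ) := Nat.cast_nonneg d
      linarith
    nlinarith
  have hR : 0 < R := lt_trans hr hrR
  have hRr0 : 0 < R - r := by linarith
  -- the good cubes
  have hCr : GoodSet (cube d r) := goodSet_cube r
  have hCR : GoodSet (cube d R) := goodSet_cube R
  set S : Set (Pt d) := Φ (cube d r) (cube d r) with hS_def
  set T : Set (Pt d) := Φ (cube d R) (cube d R) with hT_def
  -- Φ A B ⊆ S, so S is unbounded
  have hsubS : Φ A B ⊆ S := by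
    calc Φ A B ⊆ Φ (cube d r) B := hax.mono A (cube d r) B hA hCr hB hAsub
      _ = Φ B (cube d r) := hax.comm _ _ hCr hB
      _ ⊆ Φ (cube d r) (cube d r) := hax.mono B (cube d r) (cube d r) hB hCr hCr hBsub
  have hSub : ¬ IsBounded S := fun h => hub (h.subset hsubS)
  -- S is symmetric under negation
  have hSneg : ∀ q ∈ S, -q ∈ S := by
    intro q hq
    have h1 := hax.rotate (cube d r) (cube d r) (LinearIsometryEquiv.neg ℝ)
      cubicIsometry_neg hCr hCr
    rw [neg_image_cube] at h1
    rw [hS_def, h1]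
    exact ⟨q, hq, by simp⟩
  -- translation lemma : S + x ⊆ T for x in the cube of radius R - r
  have hsub1 : ∀ x ∈ cube d (R - r), ∀ q ∈ S, q + x ∈ T := by
    intro x hx q hq
    have himg : (· + x) '' cube d r ⊆ cube d R := by
      rintro y ⟨z, hz, rfl⟩ i
      have h1 : |z i + x i| ≤ |z i| + |x i| := abs_add_le _ _
      have h2 := hz i
      have h3 := hx i
      show |z i + x i| < R
      linarith
    have hgood : GoodSet ((· + x) '' cube d r) := goodSet_translate hCr x
    have hmem : q + x ∈ Φ ((· + x) '' cube d r) ((· + x) '' cube d r) := by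
      rw [hax.translate (cube d r) (cube d r) x hCr hCr]
      exact ⟨q, hq, rfl⟩
    have hsub2 : Φ ((· + x) '' cube d r) ((· + x) '' cube d r) ⊆ T := by
      calc Φ ((· + x) '' cube d r) ((· + x) '' cube d r)
          ⊆ Φ (cube d R) ((· + x) '' cube d r) :=
            hax.mono _ _ _ hgood hCR hgood himg
        _ = Φ ((· + x) '' cube d r) (cube d R) := hax.comm _ _ hCR hgood
        _ ⊆ Φ (cube d R) (cube d R) := hax.mono _ _ _ hgood hCR hCR himg
    exact hsub2 hmem
  -- find a far away point of S
  have hfar : ∃ p ∈ S, 2 * R * d < ‖p‖ := by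
    by_contra h
    push_neg at h
    exact hSub (isBounded_iff_forall_norm_le.mpr ⟨2 * R * d, h⟩)
  obtain ⟨p, hpS, hpnorm⟩ := hfar
  -- find a coordinate that is large
  have hj : ∃ j : Fin d, 2 * R < |p j| := by
    by_contra h
    push_neg at h
    have hnorm : ‖p‖ ≤ 2 * R * d := by
      rw [EuclideanSpace.norm_eq]
      have h1 : ∑ j, ‖p j‖ ^ 2 ≤ (d : ℝ) * (2 * R) ^ 2 := by
        calc ∑ j, ‖p j‖ ^ 2 ≤ ∑ _j : Fin d, (2 * R) ^ 2 := by
              apply Finset.sum_le_sum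
              intro j _
              have := pow_le_pow_left₀ (abs_nonneg (p j)) (h j) 2
              simpa [Real.norm_eq_abs] using this
          _ = (d : ℝ) * (2 * R) ^ 2 := by simp [Finset.sum_const, nsmul_eq_mul]
      have h2 : (d : ℝ) * (2 * R) ^ 2 ≤ (2 * R * d) ^ 2 := by
        have hd1 : (1 : ℝ) ≤ (d : ℝ) := by exact_mod_cast hd0
        nlinarith
      calc Real.sqrt (∑ j, ‖p j‖ ^ 2) ≤ Real.sqrt ((2 * R * d) ^ 2) :=
            Real.sqrt_le_sqrt (le_trans h1 h2)
        _ = 2 * R * d := Real.sqrt_sq (by positivity)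
    linarith
  obtain ⟨j, hpj⟩ := hj
  -- the three disjoint subsets of T
  set X : Set (Pt d) := cube d (R - r) with hX_def
  set Y₁ : Set (Pt d) := (fun y => y + p) '' X with hY1_def
  set Y₂ : Set (Pt d) := (fun y => y + (-p)) '' X with hY2_def
  have hY1T : Y₁ ⊆ T := by
    rintro y ⟨x, hx, rfl⟩
    have := hsub1 x hx p hpS
    rwa [add_comm] at this
  have hY2T : Y₂ ⊆ T := by
    rintro y ⟨x, hx, rfl⟩
    have := hsub1 x hx (-p) (hSneg p hpS)
    rwa [add_comm] at this
  have hKT : cube d R ⊆ T := hax.subset_sum _ _ hCR hCR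
  -- disjointness
  have hdisj1K : Disjoint Y₁ (cube d R) := by
    rw [Set.disjoint_left]
    rintro y ⟨x, hx, rfl⟩ hyK
    have h1 : |x j| < R - r := hx j
    have h2 : |x j + p j| < R := hyK j
    have h3 : |p j| ≤ |x j + p j| + |x j| := by
      have heq : |p j| = |(x j + p j) - x j| := by
        rw [show (x j + p j) - x j = p j by ring]
      rw [heq]
      exact abs_sub _ _
    linarith
  have hdisj2K : Disjoint Y₂ (cube d R) := by
    rw [Set.disjoint_left]
    rintro y ⟨x, hx, rfl⟩ hyK
    have h1 : |x j| < R - r := hx j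
    have h2 : |x j + (-p) j| < R := hyK j
    have hnp : (-p) j = -(p j) := rfl
    rw [hnp] at h2
    have h3 : |p j| ≤ |x j + -(p j)| + |x j| := by
      have heq : |p j| = |(x j + -(p j)) - x j| := by
        rw [show (x j + -(p j)) - x j = -(p j) by ring, abs_neg]
      rw [heq]
      exact abs_sub _ _
    linarith
  have hdisj12 : Disjoint Y₁ Y₂ := by
    rw [Set.disjoint_left]
    rintro y ⟨x, hx, rfl⟩ ⟨w, hw, hwy⟩
    have h1 := hx j
    have h2 := hw j
    have hcoord : w j + (-p) j = x j + p j := congrArg (fun z : Pt d => z j) hwy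
    have hnp : (-p) j = -(p j) := rfl
    rw [hnp] at hcoord
    have h3 : 2 * p j = w j - x j := by linarith
    have h4 : |2 * p j| ≤ |w j| + |x j| := by
      rw [h3]
      calc |w j - x j| = |w j + (-(x j))| := by ring_nf
        _ ≤ |w j| + |(-(x j))| := abs_add_le _ _
        _ = |w j| + |x j| := by rw [abs_neg]
    have h5 : |2 * p j| = 2 * |p j| := by
      rw [abs_mul]; norm_num
    linarith
  -- measure computations
  have hXopen : IsOpen X := isOpen_cube _
  have hY1open : IsOpen Y₁ := (Homeomorph.addRight p).isOpenMap _ hXopen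
  have hY2open : IsOpen Y₂ := (Homeomorph.addRight (-p)).isOpenMap _ hXopen
  have hY1vol : volume Y₁ = volume X := by
    have heq : Y₁ = (fun y => y + (-p)) ⁻¹' X := by
      ext y
      constructor
      · rintro ⟨x, hx, rfl⟩
        have : x + p + (-p) = x := add_neg_cancel_right x p
        simpa [Set.mem_preimage, this] using hx
      · intro hy
        exact ⟨y + (-p), hy, neg_add_cancel_right y p⟩
    rw [heq, measure_preimage_add_right]
  have hY2vol : volume Y₂ = volume X := by
    have heq : Y₂ = (fun y => y + p) ⁻¹' X := by
      ext y
      constructor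
      · rintro ⟨x, hx, rfl⟩
        have : x + (-p) + p = x := neg_add_cancel_right x p
        simpa [Set.mem_preimage, this] using hx
      · intro hy
        exact ⟨y + p, hy, add_neg_cancel_right y p⟩
    rw [heq, measure_preimage_add_right]
  have hTvol : volume T = volume (cube d R) + volume (cube d R) :=
    hax.conserve _ _ hCR hCR
  have hge : volume X + volume X + volume (cube d R) ≤ volume T := by
    have hsubU : Y₁ ∪ (Y₂ ∪ cube d R) ⊆ T := by
      refine Set.union_subset hY1T (Set.union_subset hY2T hKT)
    have hd1 : Disjoint Y₁ (Y₂ ∪ cube d R) :=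
      Set.disjoint_union_right.mpr ⟨hdisj12, hdisj1K⟩
    have hmeas : volume (Y₁ ∪ (Y₂ ∪ cube d R))
        = volume Y₁ + (volume Y₂ + volume (cube d R)) := by
      rw [measure_union hd1 (hY2open.measurableSet.union (isOpen_cube R).measurableSet),
        measure_union hdisj2K (isOpen_cube R).measurableSet]
    calc volume X + volume X + volume (cube d R)
        = volume Y₁ + (volume Y₂ + volume (cube d R)) := by
          rw [hY1vol, hY2vol]; ring
      _ = volume (Y₁ ∪ (Y₂ ∪ cube d R)) := hmeas.symm
      _ ≤ volume T := measure_mono hsubU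
  have hKtop : volume (cube d R) ≠ ⊤ := (isBounded_cube (d := d) R).measure_lt_top.ne
  have hXX : volume X + volume X ≤ volume (cube d R) := by
    rw [hTvol] at hge
    exact (ENNReal.add_le_add_iff_right hKtop).mp hge
  -- scaling : cube R = c • X with c = (2d+2)/(2d+1)
  set c : ℝ := (2 * (d : ℝ) + 2) / (2 * (d : ℝ) + 1) with hc_def
  have hden : (0:ℝ) < 2 * (d : ℝ) + 1 := by positivity
  have hc : 0 < c := by positivity
  have hcR : c * (R - r) = R := by
    rw [hRr, hR_def, hc_def]
    field_simp
  have hKX : cube d R = c • X := by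
    ext y
    rw [Set.mem_smul_set_iff_inv_smul_mem₀ hc.ne']
    have hcoord : ∀ i, (c⁻¹ • y) i = c⁻¹ * y i := fun i => rfl
    constructor
    · intro h i
      show |(c⁻¹ • y) i| < R - r
      rw [hcoord i, abs_mul, abs_of_pos (inv_pos.mpr hc)]
      have h1 : |y i| < R := h i
      have h2 : c⁻¹ * |y i| < c⁻¹ * R := by
        exact (mul_lt_mul_iff_right₀ (inv_pos.mpr hc)).mpr h1
      have h3 : c⁻¹ * R = R - r := by
        conv_lhs => rw [← hcR]
        rw [← mul_assoc, inv_mul_cancel₀ hc.ne', one_mul]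
      linarith
    · intro h i
      have h1 : |(c⁻¹ • y) i| < R - r := h i
      rw [hcoord i, abs_mul, abs_of_pos (inv_pos.mpr hc)] at h1
      have h2 : c * (c⁻¹ * |y i|) < c * (R - r) := (mul_lt_mul_iff_right₀ hc).mpr h1
      rw [← mul_assoc, mul_inv_cancel₀ hc.ne', one_mul, hcR] at h2
      exact h2
  have hKvol : volume (cube d R) = ENNReal.ofReal (c ^ d) * volume X := by
    rw [hKX, Measure.addHaar_smul]
    congr 2
    rw [show Module.finrank ℝ (Pt d) = d from finrank_euclideanSpace_fin]
    exact abs_of_pos (pow_pos hc d)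
  have hX0 : volume X ≠ 0 := by
    have h0mem : (0 : Pt d) ∈ X := by
      intro i
      show |(0 : Pt d) i| < R - r
      have : (0 : Pt d) i = 0 := rfl
      rw [this, abs_zero]
      exact hRr0
    exact (hXopen.measure_pos volume ⟨0, h0mem⟩).ne'
  have hXtop : volume X ≠ ⊤ := (isBounded_cube (d := d) (R - r)).measure_lt_top.ne
  have h2le : (2 : ENNReal) ≤ ENNReal.ofReal (c ^ d) := by
    rw [hKvol] at hXX
    have h1 : 2 * volume X ≤ ENNReal.ofReal (c ^ d) * volume X := by
      rw [two_mul]; exact hXX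
    exact (ENNReal.mul_le_mul_iff_left hX0 hXtop).mp h1
  have hcd2 : (2 : ℝ) ≤ c ^ d := by
    rw [show (2 : ENNReal) = ENNReal.ofReal 2 by norm_num] at h2le
    exact (ENNReal.ofReal_le_ofReal_iff (by positivity)).mp h2le
  -- Bernoulli : c ^ d < 2
  set b : ℝ := 1 - (2 * (d : ℝ) + 2)⁻¹ with hb_def
  have hden2 : (0:ℝ) < 2 * (d : ℝ) + 2 := by positivity
  have hbB : 1 + (d : ℝ) * (-(2 * (d : ℝ) + 2)⁻¹) ≤ (1 + (-(2 * (d : ℝ) + 2)⁻¹)) ^ d := by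
    apply one_add_mul_le_pow
    have h1 : (2 * (d : ℝ) + 2)⁻¹ ≤ 1 := by
      rw [inv_le_one_iff₀]
      right; linarith
    linarith
  have hb_half : (1 : ℝ) / 2 < b ^ d := by
    have h1 : (d : ℝ) * (2 * (d : ℝ) + 2)⁻¹ < 1 / 2 := by
      rw [← div_eq_mul_inv, div_lt_iff₀ hden2]
      linarith
    have h2 : (1 : ℝ) / 2 < 1 + (d : ℝ) * (-(2 * (d : ℝ) + 2)⁻¹) := by
      have : (d : ℝ) * (-(2 * (d : ℝ) + 2)⁻¹) = -((d : ℝ) * (2 * (d : ℝ) + 2)⁻¹) := by ring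
      rw [this]; linarith
    calc (1 : ℝ) / 2 < 1 + (d : ℝ) * (-(2 * (d : ℝ) + 2)⁻¹) := h2
      _ ≤ (1 + (-(2 * (d : ℝ) + 2)⁻¹)) ^ d := hbB
      _ = b ^ d := by rw [hb_def]; ring_nf
  have hbpos : (0 : ℝ) < b ^ d := lt_trans (by norm_num) hb_half
  have hcb : c * b = 1 := by
    rw [hc_def, hb_def]
    field_simp
    ring
  have hcd_lt : c ^ d < 2 := by
    have h5 : c ^ d * b ^ d = 1 := by
      rw [← mul_pow, hcb, one_pow]
    have h6 : c ^ d = 1 / b ^ d := by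
      field_simp at h5 ⊢
      linarith [h5]
    rw [h6, div_lt_iff₀ hbpos]
    linarith
  linarith
end

section
/- For every open set A ⊆ ℝ^d there is exactly one bulky open set essentially equal to A; that is, there is a unique open set U with λ(U Δ A) = 0 such that U contains every open set V with λ(V Δ U) = 0. -/
open MeasureTheory

private lemma null_mono {X : Type*} [MeasurableSpace X] {μ : Measure X} {s t : Set X}
    (h : s ⊆ t) (ht : μ t = 0) : μ s = 0 :=
  le_antisymm (le_trans (measure_mono h) ht.le) bot_le

/-- For every open set A ⊆ ℝ^d there is exactly one bulky open set essentially
equal to A: a unique open set U with λ(U Δ A) = 0 which contains every open set V with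
λ(V Δ U) = 0. -/
theorem exists_unique_bulky (d : ℕ) (A : Set (EuclideanSpace ℝ (Fin d))) (hA : IsOpen A) :
    ∃! U : Set (EuclideanSpace ℝ (Fin d)),
      IsOpen U ∧ volume (symmDiff U A) = 0 ∧
        ∀ V : Set (EuclideanSpace ℝ (Fin d)), IsOpen V → volume (symmDiff V U) = 0 → V ⊆ U := by
  set S : Set (Set (EuclideanSpace ℝ (Fin d))) :=
    {V | IsOpen V ∧ volume (V \ A) = 0} with hS
  set U : Set (EuclideanSpace ℝ (Fin d)) := ⋃₀ S with hU
  have hUopen : IsOpen U := isOpen_sUnion fun V hV => hV.1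
  have hAU : A ⊆ U := Set.subset_sUnion_of_mem ⟨hA, by simp⟩
  have hUA : volume (U \ A) = 0 := by
    obtain ⟨T, hTc, hTS, hTU⟩ := TopologicalSpace.isOpen_sUnion_countable S fun V hV => hV.1
    have : U \ A ⊆ ⋃ V ∈ T, (V \ A) := by
      rw [hU, ← hTU]
      rintro x ⟨hx, hxA⟩
      obtain ⟨V, hVT, hxV⟩ := hx
      exact Set.mem_biUnion hVT ⟨hxV, hxA⟩
    refine null_mono this ?_
    refine (measure_biUnion_null_iff hTc).2 fun V hVT => (hTS hVT).2
  have hsymm : volume (symmDiff U A) = 0 := by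
    rw [Set.symmDiff_def]
    rw [measure_union_null_iff]
    exact ⟨hUA, by simp [Set.diff_eq_empty.2 hAU]⟩
  have key : ∀ V : Set (EuclideanSpace ℝ (Fin d)), IsOpen V → volume (symmDiff V U) = 0 →
      V ⊆ U := by
    intro V hVopen hVU
    have hVdiff : volume (V \ A) = 0 := by
      have h1 : V \ A ⊆ (V \ U) ∪ (U \ A) := by
        rintro x ⟨hxV, hxA⟩
        by_cases hxU : x ∈ U
        · exact Or.inr ⟨hxU, hxA⟩
        · exact Or.inl ⟨hxV, hxU⟩
      refine null_mono h1 ?_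
      rw [measure_union_null_iff]
      exact ⟨null_mono (by rw [Set.symmDiff_def]; exact Set.subset_union_left) hVU, hUA⟩
    exact Set.subset_sUnion_of_mem ⟨hVopen, hVdiff⟩
  refine ⟨U, ⟨hUopen, hsymm, key⟩, ?_⟩
  rintro W ⟨hWopen, hWA, hWkey⟩
  have htri : ∀ (a b c : Set (EuclideanSpace ℝ (Fin d))), volume (symmDiff a b) = 0 →
      volume (symmDiff b c) = 0 → volume (symmDiff a c) = 0 := by
    intro a b c h1 h2
    refine null_mono (symmDiff_triangle a b c) ?_
    have : symmDiff a b ⊔ symmDiff b c = symmDiff a b ∪ symmDiff b c := rfl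
    rw [this, measure_union_null_iff]
    exact ⟨h1, h2⟩
  have hWU : volume (symmDiff W U) = 0 := htri W A U hWA (by rwa [symmDiff_comm])
  have h1 : W ⊆ U := key W hWopen hWU
  have h2 : U ⊆ W := hWkey U hUopen (by rwa [symmDiff_comm])
  exact Set.Subset.antisymm h1 h2
end

section
/- Let A, B ⊆ ℝ^d be open sets. Then A is essentially contained in B if and only if bulk(A) ⊆ bulk(B). -/
open MeasureTheory

/-- An open set is *bulky* if it contains every open set essentially equal to it
(i.e. whose symmetric difference with it has Lebesgue measure zero). -/
def Bulky {d : ℕ} (U : Set (Pt d)) : Prop :=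
  IsOpen U ∧ ∀ V : Set (Pt d), IsOpen V → volume (symmDiff V U) = 0 → V ⊆ U

/-- `bulk A` is the bulky open set essentially equal to an open set `A`: the union of all
open sets essentially contained in `A`. -/
def bulk {d : ℕ} (A : Set (Pt d)) : Set (Pt d) :=
  ⋃₀ {B : Set (Pt d) | IsOpen B ∧ volume (B \ A) = 0}

lemma bulk_diff_null {d : ℕ} (A : Set (Pt d)) : volume (bulk A \ A) = 0 := by
  obtain ⟨T, hTsub, hTc, hTeq⟩ := TopologicalSpace.isOpen_sUnion_countable
    {B : Set (Pt d) | IsOpen B ∧ volume (B \ A) = 0} (fun B hB => hB.1)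
  rw [bulk, ← hTeq]
  have hsub : ⋃₀ T \ A ⊆ ⋃ B ∈ T, (B \ A) := by
    rintro x ⟨⟨C, hC, hxC⟩, hxA⟩
    exact Set.mem_biUnion hC ⟨hxC, hxA⟩
  exact measure_mono_null hsub
    ((measure_biUnion_null_iff hTsub).2 fun C hC => (hTc hC).2)

lemma subset_bulk {d : ℕ} {A : Set (Pt d)} (hA : IsOpen A) : A ⊆ bulk A :=
  Set.subset_sUnion_of_mem ⟨hA, by simp⟩

/-- Let A, B ⊆ ℝ^d be open sets. Then A is essentially contained in B
(λ(A \ B) = 0) if and only if bulk(A) ⊆ bulk(B). -/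
theorem essSubset_iff_bulk_subset (d : ℕ) (A B : Set (Pt d))
    (hA : IsOpen A) (hB : IsOpen B) :
    volume (A \ B) = 0 ↔ bulk A ⊆ bulk B := by
  constructor
  · intro h x hx
    obtain ⟨C, ⟨hCopen, hCA⟩, hxC⟩ := hx
    refine Set.mem_sUnion.2 ⟨C, ⟨hCopen, ?_⟩, hxC⟩
    have : C \ B ⊆ (C \ A) ∪ (A \ B) := fun y ⟨hyC, hyB⟩ => by
      by_cases hyA : y ∈ A
      · exact Or.inr ⟨hyA, hyB⟩
      · exact Or.inl ⟨hyC, hyA⟩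
    exact measure_mono_null this (measure_union_null hCA h)
  · intro h
    have h1 : A \ B ⊆ bulk B \ B := fun y ⟨hyA, hyB⟩ =>
      ⟨h (subset_bulk hA hyA), hyB⟩
    exact measure_mono_null h1 (bulk_diff_null B)
end

section
/- Let ⊕ be a sum of open sets in ℝ^d satisfying the six requirements exactly, and such that A ⊕ B is bulky for all bounded open A, B. Let E ⊆ ℝ^d be a bounded open set and C ⊆ ℝ^d a bounded open set whose topological boundary ∂C has Lebesgue measure zero. Then (E \ cl(C)) ⊕ (E ∩ C) = bulk(E), where cl(C) denotes the topological closure of C. -/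
open MeasureTheory Metric Bornology

/-- Let ⊕ be a sum of open sets in ℝ^d satisfying the six requirements
exactly and producing bulky sums. Let E be a bounded open set and C a bounded open set
whose boundary has measure zero. Then (E \ cl(C)) ⊕ (E ∩ C) = bulk(E). -/
theorem sum_split_eq_bulk (d : ℕ)
    (Φ : Set (Pt d) → Set (Pt d) → Set (Pt d)) (hax : SumAxioms d Φ)
    (hbulky : ∀ A B, GoodSet A → GoodSet B → Bulky (Φ A B))
    (E C : Set (Pt d)) (hE : GoodSet E) (hC : GoodSet C)
    (hfr : volume (frontier C) = 0) :
    Φ (E \ closure C) (E ∩ C) = bulk E := by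
  set A := E \ closure C with hAdef
  set B := E ∩ C with hBdef
  have hGA : GoodSet A := ⟨hE.1.sdiff isClosed_closure, hE.2.subset Set.diff_subset⟩
  have hGB : GoodSet B := ⟨hE.1.inter hC.1, hE.2.subset Set.inter_subset_left⟩
  set S := Φ A B with hSdef
  have hSopen : IsOpen S := hax.isOpen A B hGA hGB
  have hAS : A ⊆ S := hax.subset_sum A B hGA hGB
  have hBS : B ⊆ S := by
    rw [hSdef, hax.comm A B hGA hGB]; exact hax.subset_sum B A hGB hGA
  have hABE : A ∪ B ⊆ E := Set.union_subset Set.diff_subset Set.inter_subset_left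
  have hfr' : E \ (A ∪ B) ⊆ frontier C := by
    intro x hx
    have hxA : x ∉ A := fun h => hx.2 (Or.inl h)
    have hxB : x ∉ B := fun h => hx.2 (Or.inr h)
    have hxcl : x ∈ closure C := by
      by_contra h; exact hxA ⟨hx.1, h⟩
    have hxC : x ∉ C := fun h => hxB ⟨hx.1, h⟩
    refine ⟨hxcl, ?_⟩
    rw [hC.1.interior_eq]; exact hxC
  have hvolE : volume E < ⊤ := hE.2.measure_lt_top
  have hdisj : Disjoint A B := by
    refine Set.disjoint_left.2 fun x hxA hxB => ?_
    exact hxA.2 (subset_closure hxB.2)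
  have hsumAB : volume (A ∪ B) = volume A + volume B :=
    measure_union hdisj hGB.1.measurableSet
  have hEAB : volume E = volume (A ∪ B) := by
    refine le_antisymm ?_ (measure_mono hABE)
    calc volume E ≤ volume ((A ∪ B) ∪ (E \ (A ∪ B))) := by
          refine measure_mono fun x hx => ?_
          by_cases h : x ∈ A ∪ B
          · exact Or.inl h
          · exact Or.inr ⟨hx, h⟩
      _ ≤ volume (A ∪ B) + volume (E \ (A ∪ B)) := measure_union_le _ _
      _ = volume (A ∪ B) := by rw [measure_mono_null hfr' hfr, add_zero]
  have hvolS : volume S = volume E := by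
    rw [hSdef, hax.conserve A B hGA hGB, ← hsumAB, hEAB]
  have hSE : volume (S \ E) = 0 := by
    have hkey : volume (S ∩ E) + volume (S \ E) = volume S :=
      measure_inter_add_diff S hE.1.measurableSet
    have h1 : volume E ≤ volume (S ∩ E) := by
      rw [hEAB]
      exact measure_mono (Set.subset_inter (Set.union_subset hAS hBS) hABE)
    have h2 : volume E + volume (S \ E) ≤ volume E + 0 := by
      rw [add_zero]
      calc volume E + volume (S \ E) ≤ volume (S ∩ E) + volume (S \ E) := by
            exact add_le_add h1 le_rfl
        _ = volume S := hkey
        _ = volume E := hvolS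
    have := (ENNReal.add_le_add_iff_left hvolE.ne).1 h2
    exact le_antisymm this zero_le
  have hES : volume (E \ S) = 0 := by
    refine measure_mono_null ?_ hfr
    intro x hx
    exact hfr' ⟨hx.1, fun h => hx.2 (h.elim (fun h' => hAS h') (fun h' => hBS h'))⟩
  have hbulkopen : IsOpen (bulk E) := isOpen_sUnion fun s hs => hs.1
  have hbulkE : volume (bulk E \ E) = 0 := by
    obtain ⟨T, hTc, hTsub, hTeq⟩ :=
      TopologicalSpace.isOpen_sUnion_countable
        {B : Set (Pt d) | IsOpen B ∧ volume (B \ E) = 0} (fun s hs => hs.1)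
    rw [bulk, ← hTeq]
    have : (⋃₀ T) \ E = ⋃ s ∈ T, s \ E := by
      rw [Set.sUnion_eq_biUnion]
      ext x; simp [Set.mem_iUnion, and_comm]
    rw [this, measure_biUnion_null_iff hTc]
    exact fun s hs => (hTsub hs).2
  have hSbulk : S ⊆ bulk E := Set.subset_sUnion_of_mem ⟨hSopen, hSE⟩
  have hbulkS : bulk E ⊆ S := by
    refine (hbulky A B hGA hGB).2 (bulk E) hbulkopen ?_
    rw [symmDiff_def]
    refine measure_union_null ?_ ?_
    · refine measure_mono_null (fun x hx => ?_) (measure_union_null hbulkE hES)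
      by_cases h : x ∈ E
      · exact Or.inr ⟨h, hx.2⟩
      · exact Or.inl ⟨hx.1, h⟩
    · rw [Set.diff_eq_empty.2 hSbulk]; simp
  exact le_antisymm hSbulk hbulkS
end

section
/- Let A ⊆ ℝ^d be a bounded open set and η > 0. Then there exists a bulky open set A₀ ⊆ A with λ(A \ A₀) < η whose topological boundary ∂A₀ has Lebesgue measure zero. -/
open MeasureTheory Metric Set

/-- Let A ⊆ ℝ^d be a bounded open set and η > 0. Then there exists a bulky
open set A₀ ⊆ A with λ(A \ A₀) < η whose topological boundary has Lebesgue measure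
zero. -/
theorem exists_bulky_subset_small_boundary (d : ℕ) (A : Set (Pt d))
    (hA : IsOpen A) (hAb : Bornology.IsBounded A) (η : ℝ) (hη : 0 < η) :
    ∃ A₀ : Set (Pt d), A₀ ⊆ A ∧ Bulky A₀ ∧
      volume (A \ A₀) < ENNReal.ofReal η ∧ volume (frontier A₀) = 0 := by
  have hηne : ENNReal.ofReal η ≠ 0 := by simp [hη]
  obtain ⟨K, hKA, hKc, hKlt⟩ := hA.measurableSet.exists_isCompact_diff_lt
    (μ := volume) hAb.measure_lt_top.ne hηne
  have hr : ∀ x ∈ K, ∃ r > 0, closedBall x r ⊆ A := by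
    intro x hx
    obtain ⟨ε, hε, hb⟩ := Metric.isOpen_iff.1 hA x (hKA hx)
    exact ⟨ε / 2, by positivity, (closedBall_subset_ball (by linarith)).trans hb⟩
  choose! r hrpos hrsub using hr
  obtain ⟨t, htK, htcov⟩ := hKc.elim_nhds_subcover (fun x => ball x (r x))
    (fun x hx => ball_mem_nhds x (hrpos x hx))
  set U : Set (Pt d) := ⋃ x ∈ t, ball x (r x) with hU
  have hUopen : IsOpen U := isOpen_biUnion fun x _ => isOpen_ball
  have hclU : closure U ⊆ ⋃ x ∈ t, closedBall x (r x) := by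
    refine closure_minimal (iUnion₂_mono fun x _ => ball_subset_closedBall) ?_
    exact t.finite_toSet.isClosed_biUnion fun x _ => Metric.isClosed_closedBall
  have hclUA : closure U ⊆ A :=
    hclU.trans (iUnion₂_subset fun x hx => hrsub x (htK x hx))
  set A₀ : Set (Pt d) := interior (closure U) with hA₀
  have hA₀open : IsOpen A₀ := isOpen_interior
  have hUA₀ : U ⊆ A₀ := hUopen.subset_interior_iff.2 subset_closure
  have hA₀A : A₀ ⊆ A := interior_subset.trans hclUA
  have hclA₀ : closure A₀ ⊆ closure U :=
    closure_minimal interior_subset isClosed_closure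
  have hreg : interior (closure A₀) = A₀ :=
    subset_antisymm (interior_mono hclA₀) (hA₀open.subset_interior_iff.2 subset_closure)
  -- frontier measure zero
  have hfr : volume (frontier A₀) = 0 := by
    have h1 : frontier A₀ ⊆ ⋃ x ∈ t, sphere x (r x) := by
      intro y hy
      have hyc : y ∈ closure U := hclA₀ hy.1
      have hynU : y ∉ U := fun h => hy.2 (by rw [hA₀open.interior_eq]; exact hUA₀ h)
      obtain ⟨x, hx, hyx⟩ := mem_iUnion₂.1 (hclU hyc)
      refine mem_iUnion₂.2 ⟨x, hx, ?_⟩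
      rw [← closedBall_diff_ball]
      exact ⟨hyx, fun hb => hynU (mem_iUnion₂.2 ⟨x, hx, hb⟩)⟩
    refine measure_mono_null h1 ?_
    refine (measure_biUnion_null_iff t.countable_toSet).2 fun x hx => ?_
    exact Measure.addHaar_sphere_of_ne_zero _ _ (hrpos x (htK x hx)).ne'
  refine ⟨A₀, hA₀A, ⟨hA₀open, ?_⟩, ?_, hfr⟩
  · intro V hV hVol
    have h0 : V \ closure A₀ = ∅ := by
      refine (hV.sdiff isClosed_closure).measure_eq_zero_iff volume |>.1 ?_
      refine measure_mono_null (fun y hy => ?_) hVol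
      exact Or.inl ⟨hy.1, fun h => hy.2 (subset_closure h)⟩
    have : V ⊆ closure A₀ := diff_eq_empty.1 h0
    calc V = interior V := hV.interior_eq.symm
    _ ⊆ interior (closure A₀) := interior_mono this
    _ = A₀ := hreg
  · refine lt_of_le_of_lt (measure_mono fun y hy => ?_) hKlt
    exact ⟨hy.1, fun h => hy.2 (hUA₀ (htcov h))⟩
end
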